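/- arXiv:2212.13275 — 2 statements merged into one kernel-verified Lean document; each statement's English description precedes it below -/
import Mathlib

section
/- Let G be a locally compact group, H a closed normal subgroup of G, and c ≥ 1. If both H (with the subspace topology) and the quotient group G/H have Property (T)_c, then G has Property (T)_c. -/
open scoped ENNReal
open MeasureTheory

structure HilbRep (G : Type*) [Group G] [TopologicalSpace G] where
  (space : Type*)
  [normedAddCommGroup : NormedAddCommGroup space]
  [innerProductSpace : InnerProductSpace ℂ space]
  [completeSpace : CompleteSpace space]
  toFun : G →* (space →L[ℂ] space)ˣ

attribute [instance] HilbRep.normedAddCommGroup HilbRep.innerProductSpace HilbRep.completeSpace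

namespace HilbRep

variable {G : Type*} [Group G] [TopologicalSpace G]

/-- The bounded invertible operator associated to a group element. -/
def op (π : HilbRep G) (s : G) : π.space →L[ℂ] π.space :=
  (π.toFun s : π.space →L[ℂ] π.space)

/-- The representation is uniformly bounded by `c`. -/
def IsUB (π : HilbRep G) (c : ℝ) : Prop := ∀ s : G, ‖π.op s‖ ≤ c

/-- The representation is continuous for the strong operator topology. -/
def IsSOTContinuous (π : HilbRep G) : Prop :=
  ∀ ξ : π.space, Continuous fun s : G => π.op s ξ

/-- `π ∈ R_c(G)`: strongly continuous and uniformly bounded by `c`. -/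
def IsRc (π : HilbRep G) (c : ℝ) : Prop := π.IsUB c ∧ π.IsSOTContinuous

/-- `π` almost has invariant vectors. -/
def AlmostInvariantVectors (π : HilbRep G) : Prop :=
  ∀ Q : Set G, IsCompact Q → ∀ ε : ℝ, 0 < ε →
    ∃ ξ : π.space, ∀ s ∈ Q, ‖π.op s ξ - ξ‖ < ε * ‖ξ‖

/-- `π` has a nonzero invariant vector. -/
def HasInvariantVector (π : HilbRep G) : Prop :=
  ∃ ξ : π.space, ξ ≠ 0 ∧ ∀ s : G, π.op s ξ = ξ

end HilbRep

universe u v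

/-- Property (T)_c. -/
def HasPropertyT (G : Type u) [Group G] [TopologicalSpace G] (c : ℝ) : Prop :=
  ∀ π : HilbRep.{u, v} G, π.IsRc c → π.AlmostInvariantVectors → π.HasInvariantVector

/-!
Let `K` be the space of `H`-fixed vectors of `π`. Since `H` is normal, `K` is `G`-invariant and
`G ⧸ H` acts on it. Compressing `π|H` to `Kᗮ` gives a representation without nonzero invariant
vectors: for a fixed `η`, `h ↦ π h η - η` is an additive map `H → K`, bounded by `(c + 1)‖η‖`,
hence zero, so `η ∈ K ∩ Kᗮ`. Property (T)_c of `H` then provides a compact `Q₀` and `δ > 0` with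
`δ · ‖ξ - P_K ξ‖ ≤ sup_{Q₀} ‖π s ξ - ξ‖`, so the projections to `K` of almost invariant vectors
of `π` are almost invariant for `G ⧸ H`, and Property (T)_c of `G ⧸ H` finishes the proof.
-/

theorem IsOpenMap.exists_isCompact_subset_image {X Y : Type*} [TopologicalSpace X]
    [TopologicalSpace Y] [LocallyCompactSpace X] {f : X → Y} (hf : IsOpenMap f)
    (hsurj : Function.Surjective f) {Q : Set Y} (hQ : IsCompact Q) :
    ∃ L, IsCompact L ∧ Q ⊆ f '' L := by
  choose L hL using fun x : X => exists_compact_mem_nhds x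
  obtain ⟨t, -, ht⟩ := hQ.elim_nhds_subcover (fun y => f '' L (Function.surjInv hsurj y))
    fun y _ => by
      simpa only [Function.surjInv_eq hsurj y] using
        hf.image_mem_nhds (hL (Function.surjInv hsurj y)).2
  refine ⟨⋃ y ∈ t, L (Function.surjInv hsurj y), t.isCompact_biUnion fun y _ => (hL _).1, ?_⟩
  rwa [Set.image_iUnion₂]

namespace HilbRep

variable {G : Type*} [Group G] [TopologicalSpace G] (π : HilbRep G)

lemma op_mul (s t : G) : π.op (s * t) = π.op s * π.op t := by
  simp [op]

lemma op_one : π.op 1 = 1 := by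
  simp [op]

lemma op_mul_apply (s t : G) (ξ : π.space) : π.op (s * t) ξ = π.op s (π.op t ξ) := by
  rw [op_mul]; rfl

lemma op_one_apply (ξ : π.space) : π.op 1 ξ = ξ := by
  rw [op_one]; rfl

variable {π} {c : ℝ}

lemma IsUB.nonneg (h : π.IsUB c) : 0 ≤ c :=
  (norm_nonneg _).trans (h 1)

lemma IsUB.norm_op_apply_le (h : π.IsUB c) (s : G) (ξ : π.space) : ‖π.op s ξ‖ ≤ c * ‖ξ‖ :=
  (π.op s).le_of_opNorm_le (h s) ξ

lemma isUB_of_norm_op_apply_le (hc : 0 ≤ c) (h : ∀ s ξ, ‖π.op s ξ‖ ≤ c * ‖ξ‖) : π.IsUB c :=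
  fun s => ContinuousLinearMap.opNorm_le_bound _ hc (h s)

lemma IsUB.norm_op_apply_sub_le (h : π.IsUB c) (s : G) (ξ : π.space) :
    ‖π.op s ξ - ξ‖ ≤ (c + 1) * ‖ξ‖ := by
  linarith [norm_sub_le (π.op s ξ) ξ, h.norm_op_apply_le s ξ]

lemma IsUB.norm_op_apply_sub_sub_le (hπ : π.IsUB c) (s : G) (ξ w : π.space) :
    ‖π.op s (ξ - w) - (ξ - w)‖ ≤ ‖π.op s ξ - ξ‖ + (c + 1) * ‖w‖ := by
  rw [map_sub, sub_sub_sub_comm]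
  exact (norm_sub_le _ _).trans (add_le_add le_rfl (hπ.norm_op_apply_sub_le s w))

variable (π)

def fixedSubspace (H : Subgroup G) : Submodule ℂ π.space where
  carrier := {ξ | ∀ h ∈ H, π.op h ξ = ξ}
  add_mem' ha hb h hh := by rw [map_add, ha h hh, hb h hh]
  zero_mem' _ _ := map_zero _
  smul_mem' r _ hξ h hh := by rw [map_smul, hξ h hh]

lemma isClosed_fixedSubspace (H : Subgroup G) : IsClosed (π.fixedSubspace H : Set π.space) := by
  change IsClosed {ξ | ∀ h ∈ H, π.op h ξ = ξ}
  simp only [Set.ofPred_forall]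
  exact isClosed_iInter fun h => isClosed_iInter fun _ =>
    isClosed_eq (π.op h).continuous continuous_id

instance (H : Subgroup G) : CompleteSpace (π.fixedSubspace H) :=
  (π.isClosed_fixedSubspace H).completeSpace_coe

lemma op_mem_fixedSubspace (H : Subgroup G) [H.Normal] (g : G) {ξ : π.space}
    (hξ : ξ ∈ π.fixedSubspace H) : π.op g ξ ∈ π.fixedSubspace H := by
  intro h hh
  calc π.op h (π.op g ξ) = π.op g (π.op (g⁻¹ * h * g) ξ) := by
        rw [← op_mul_apply, ← op_mul_apply]; group
    _ = π.op g ξ := by rw [hξ _ (‹H.Normal›.conj_mem' h hh g)]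

variable {π}

noncomputable def subrep (K : Submodule ℂ π.space) [CompleteSpace K]
    (hK : ∀ s, ∀ ξ ∈ K, π.op s ξ ∈ K) : HilbRep G where
  space := K
  toFun := MonoidHom.toHomUnits
    { toFun := fun s => (π.op s).restrict (hK s)
      map_one' := by ext ξ; exact π.op_one_apply ξ
      map_mul' := fun s t => by ext ξ; exact π.op_mul_apply s t ξ }

lemma IsRc.subrep (hπ : π.IsRc c) (K : Submodule ℂ π.space) [CompleteSpace K]
    (hK : ∀ s, ∀ ξ ∈ K, π.op s ξ ∈ K) : (π.subrep K hK).IsRc c :=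
  ⟨isUB_of_norm_op_apply_le hπ.1.nonneg fun s (ξ : K) => hπ.1.norm_op_apply_le s ξ,
    fun (ξ : K) => continuous_induced_rng.2 (hπ.2 ξ)⟩

variable (π) in
noncomputable def factor (H : Subgroup G) [H.Normal] (hH : ∀ h ∈ H, π.op h = 1) :
    HilbRep (G ⧸ H) where
  space := π.space
  toFun := QuotientGroup.lift H π.toFun fun h hh => Units.ext (hH h hh)

lemma IsRc.factor (hπ : π.IsRc c) (H : Subgroup G) [H.Normal] (hH : ∀ h ∈ H, π.op h = 1) :
    (π.factor H hH).IsRc c := by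
  refine ⟨fun s => ?_, fun ξ => ?_⟩
  · induction s using QuotientGroup.induction_on with
    | H g => exact hπ.1 g
  · exact (QuotientGroup.isQuotientMap_mk H).continuous_iff.2 (hπ.2 ξ)

variable (π) in
noncomputable def fixedQuotient (H : Subgroup G) [H.Normal] : HilbRep (G ⧸ H) :=
  (π.subrep (π.fixedSubspace H) fun g _ => π.op_mem_fixedSubspace H g).factor H
    fun h hh => by ext ξ; exact Subtype.ext (ξ.2 h hh)

section Compression

variable (π) (H : Subgroup G)

lemma starProjection_orthogonal_op_starProjection_orthogonal {h : G} (hh : h ∈ H) (ξ : π.space) :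
    (π.fixedSubspace H)ᗮ.starProjection (π.op h ((π.fixedSubspace H)ᗮ.starProjection ξ)) =
      (π.fixedSubspace H)ᗮ.starProjection (π.op h ξ) := by
  have hfix : π.op h ((π.fixedSubspace H).starProjection ξ) =
      (π.fixedSubspace H).starProjection ξ :=
    (π.fixedSubspace H).starProjection_apply_mem ξ h hh
  rw [Submodule.starProjection_orthogonal_val ξ, map_sub, hfix, map_sub,
    Submodule.starProjection_orthogonal_apply_eq_zero (Submodule.starProjection_apply_mem _ _),
    sub_zero]

noncomputable abbrev compressOrthogonalFixed : HilbRep H where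
  space := (π.fixedSubspace H)ᗮ
  toFun := MonoidHom.toHomUnits
    { toFun := fun h => (π.fixedSubspace H)ᗮ.orthogonalProjectionOnto ∘L π.op h ∘L
        (π.fixedSubspace H)ᗮ.subtypeL
      map_one' := by
        ext η
        change (π.fixedSubspace H)ᗮ.starProjection (π.op 1 η) = η
        rw [op_one_apply, Submodule.starProjection_eq_self_iff.2 η.2]
      map_mul' := fun h k => by
        ext η
        change (π.fixedSubspace H)ᗮ.starProjection (π.op (h * k) η) =
          (π.fixedSubspace H)ᗮ.starProjection
            (π.op h ((π.fixedSubspace H)ᗮ.starProjection (π.op k η)))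
        rw [starProjection_orthogonal_op_starProjection_orthogonal π H h.2,
          op_mul_apply] }

variable {π H}

lemma IsRc.compressOrthogonalFixed (hπ : π.IsRc c) : (π.compressOrthogonalFixed H).IsRc c :=
  ⟨isUB_of_norm_op_apply_le hπ.1.nonneg fun h (η : (π.fixedSubspace H)ᗮ) =>
      (Submodule.norm_starProjection_apply_le _ _).trans (hπ.1.norm_op_apply_le h η),
    fun (η : (π.fixedSubspace H)ᗮ) => (π.fixedSubspace H)ᗮ.orthogonalProjectionOnto.continuous.comp
      ((hπ.2 η).comp continuous_subtype_val)⟩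

lemma norm_compressOrthogonalFixed_op_sub_le (h : H) (ξ : π.space) :
    ‖(π.compressOrthogonalFixed H).op h ((π.fixedSubspace H)ᗮ.orthogonalProjectionOnto ξ) -
      (π.fixedSubspace H)ᗮ.orthogonalProjectionOnto ξ‖ ≤ ‖π.op h ξ - ξ‖ := by
  calc _ = ‖(π.fixedSubspace H)ᗮ.starProjection
          (π.op h ((π.fixedSubspace H)ᗮ.starProjection ξ)) -
          (π.fixedSubspace H)ᗮ.starProjection ξ‖ := rfl
    _ = ‖(π.fixedSubspace H)ᗮ.starProjection (π.op h ξ - ξ)‖ := by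
        rw [starProjection_orthogonal_op_starProjection_orthogonal π H h.2, map_sub]
    _ ≤ ‖π.op h ξ - ξ‖ := Submodule.norm_starProjection_apply_le _ _

lemma op_pow_apply_sub_eq_nsmul {ξ : π.space}
    (hξ : ∀ h ∈ H, π.op h ξ - ξ ∈ π.fixedSubspace H) {h : G} (hh : h ∈ H) (n : ℕ) :
    π.op (h ^ n) ξ - ξ = n • (π.op h ξ - ξ) := by
  induction n with
  | zero => simp [op_one_apply]
  | succ n ih =>
    calc π.op (h ^ (n + 1)) ξ - ξ
        = (π.op (h ^ n) ξ - ξ) + π.op (h ^ n) (π.op h ξ - ξ) := by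
          rw [pow_succ, op_mul_apply, map_sub]; abel
      _ = (n + 1) • (π.op h ξ - ξ) := by
          rw [ih, hξ h hh _ (pow_mem hh n), succ_nsmul]

lemma mem_fixedSubspace_of_forall_op_sub_mem (hπ : π.IsUB c) {ξ : π.space}
    (hξ : ∀ h ∈ H, π.op h ξ - ξ ∈ π.fixedSubspace H) : ξ ∈ π.fixedSubspace H := by
  intro h hh
  rw [← sub_eq_zero, ← norm_eq_zero]
  have hbdd (n : ℕ) : n * ‖π.op h ξ - ξ‖ ≤ (c + 1) * ‖ξ‖ := by
    rw [← nsmul_eq_mul, ← RCLike.norm_nsmul ℂ, ← op_pow_apply_sub_eq_nsmul hξ hh]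
    exact hπ.norm_op_apply_sub_le _ ξ
  by_contra hne
  have hpos := lt_of_le_of_ne (norm_nonneg _) (Ne.symm hne)
  obtain ⟨n, hn⟩ := exists_nat_gt ((c + 1) * ‖ξ‖ / ‖π.op h ξ - ξ‖)
  linarith [hbdd n, (div_lt_iff₀ hpos).1 hn]

lemma not_hasInvariantVector_compressOrthogonalFixed (hπ : π.IsUB c) :
    ¬ (π.compressOrthogonalFixed H).HasInvariantVector := by
  rintro ⟨η, hη0, hηfix⟩
  have hsub (h : G) (hh : h ∈ H) : π.op h η - η ∈ π.fixedSubspace H := by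
    have hsplit := (π.fixedSubspace H).starProjection_add_starProjection_orthogonal (π.op h η)
    rw [show (π.fixedSubspace H)ᗮ.starProjection (π.op h η) = η from
      congrArg Subtype.val (hηfix ⟨h, hh⟩)] at hsplit
    rw [← hsplit, add_sub_cancel_right]
    exact Submodule.starProjection_apply_mem _ _
  have hmem := mem_fixedSubspace_of_forall_op_sub_mem hπ hsub
  exact hη0 <| Subtype.ext <|
    Submodule.disjoint_def.1 (π.fixedSubspace H).orthogonal_disjoint _ hmem η.2

end Compression

lemma AlmostInvariantVectors.subrep (hπ : π.IsUB c) (hA : π.AlmostInvariantVectors)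
    (K : Submodule ℂ π.space) [CompleteSpace K] (hK : ∀ s, ∀ ξ ∈ K, π.op s ξ ∈ K)
    {Q₀ : Set G} (hQ₀ : IsCompact Q₀) {δ : ℝ} (hδ : 0 < δ)
    (hK₀ : ∀ ξ, ∃ s ∈ Q₀, δ * ‖ξ - K.starProjection ξ‖ ≤ ‖π.op s ξ - ξ‖) :
    (π.subrep K hK).AlmostInvariantVectors := by
  intro Q hQ ε hε
  have hc := hπ.nonneg
  set ε' := min (δ / 2) (ε * δ / (2 * (δ + c + 1)))
  have hε' : 0 < ε' := lt_min (by positivity) (by positivity)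
  obtain ⟨ξ, hξ⟩ := hA (Q ∪ Q₀) (hQ.union hQ₀) ε' hε'
  obtain ⟨s₀, hs₀, hδs₀⟩ := hK₀ ξ
  set w := ξ - K.starProjection ξ
  have hw : δ * ‖w‖ ≤ ε' * ‖ξ‖ := hδs₀.trans (hξ s₀ (.inr hs₀)).le
  refine ⟨K.orthogonalProjectionOnto ξ, fun s hs => ?_⟩
  have hw2 : ‖w‖ ≤ ‖ξ‖ / 2 := by
    refine le_of_mul_le_mul_left (hw.trans ?_) hδ
    linarith [mul_le_mul_of_nonneg_right (min_le_left (δ / 2) (ε * δ / (2 * (δ + c + 1))))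
      (norm_nonneg ξ)]
  have hξP : ‖ξ‖ ≤ 2 * ‖K.starProjection ξ‖ := by
    have : ‖ξ‖ ≤ ‖K.starProjection ξ‖ + ‖w‖ :=
      (congrArg norm (add_sub_cancel (K.starProjection ξ) ξ)).symm.le.trans (norm_add_le _ _)
    linarith
  have hε'δ : ε' * (δ + c + 1) ≤ ε * δ / 2 := by
    have := min_le_right (δ / 2) (ε * δ / (2 * (δ + c + 1)))
    rw [le_div_iff₀ (by positivity)] at this
    linarith
  have hPξ : K.starProjection ξ = ξ - w := (sub_sub_cancel ξ _).symm
  have hsum : δ * (‖π.op s ξ - ξ‖ + (c + 1) * ‖w‖) < δ * (ε * ‖K.starProjection ξ‖) :=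
    calc δ * (‖π.op s ξ - ξ‖ + (c + 1) * ‖w‖) = δ * ‖π.op s ξ - ξ‖ + (c + 1) * (δ * ‖w‖) := by
          ring
      _ < δ * (ε' * ‖ξ‖) + (c + 1) * (ε' * ‖ξ‖) :=
          add_lt_add_of_lt_of_le (mul_lt_mul_of_pos_left (hξ s (.inl hs)) hδ)
            (mul_le_mul_of_nonneg_left hw (by linarith))
      _ = ε' * (δ + c + 1) * ‖ξ‖ := by ring
      _ ≤ ε * δ / 2 * ‖ξ‖ := mul_le_mul_of_nonneg_right hε'δ (norm_nonneg ξ)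
      _ ≤ δ * (ε * ‖K.starProjection ξ‖) := by nlinarith [mul_pos hε hδ]
  calc ‖π.op s (K.starProjection ξ) - K.starProjection ξ‖
      ≤ ‖π.op s ξ - ξ‖ + (c + 1) * ‖w‖ := hPξ ▸ hπ.norm_op_apply_sub_sub_le s ξ w
    _ < ε * ‖K.starProjection ξ‖ := lt_of_mul_lt_mul_left hsum hδ.le

lemma AlmostInvariantVectors.factor [IsTopologicalGroup G] [LocallyCompactSpace G]
    (hA : π.AlmostInvariantVectors) (H : Subgroup G) [H.Normal] (hH : ∀ h ∈ H, π.op h = 1) :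
    (π.factor H hH).AlmostInvariantVectors := by
  intro Q hQ ε hε
  obtain ⟨L, hL, hQL⟩ :=
    QuotientGroup.isOpenMap_coe.exists_isCompact_subset_image QuotientGroup.mk_surjective hQ
  obtain ⟨ξ, hξ⟩ := hA L hL ε hε
  refine ⟨ξ, fun _ hs => ?_⟩
  obtain ⟨g, hg, rfl⟩ := hQL hs
  exact hξ g hg

lemma HasInvariantVector.of_subrep {K : Submodule ℂ π.space} [CompleteSpace K]
    {hK : ∀ s, ∀ ξ ∈ K, π.op s ξ ∈ K} (h : (π.subrep K hK).HasInvariantVector) :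
    π.HasInvariantVector := by
  obtain ⟨ξ, hξ0, hξ⟩ := h
  exact ⟨K.subtype ξ, fun h0 => hξ0 (Subtype.ext h0), fun s => congrArg K.subtype (hξ s)⟩

lemma HasInvariantVector.of_factor {H : Subgroup G} [H.Normal] {hH : ∀ h ∈ H, π.op h = 1}
    (h : (π.factor H hH).HasInvariantVector) : π.HasInvariantVector := by
  obtain ⟨ξ, hξ0, hξ⟩ := h
  exact ⟨ξ, hξ0, fun g => hξ g⟩

end HilbRep

open HilbRep in
theorem HasPropertyT.exists_isCompact_norm_sub_starProjection_le {G : Type u} [Group G]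
    [TopologicalSpace G] {c : ℝ} {H : Subgroup G} (hT : HasPropertyT.{u, v} H c)
    {π : HilbRep.{u, v} G} (hπ : π.IsRc c) :
    ∃ Q : Set G, IsCompact Q ∧ ∃ δ > 0, ∀ ξ, ∃ s ∈ Q,
      δ * ‖ξ - (π.fixedSubspace H).starProjection ξ‖ ≤ ‖π.op s ξ - ξ‖ := by
  have hA : ¬ (π.compressOrthogonalFixed H).AlmostInvariantVectors := fun hAlm =>
    not_hasInvariantVector_compressOrthogonalFixed hπ.1 (hT _ hπ.compressOrthogonalFixed hAlm)
  simp only [AlmostInvariantVectors, not_forall, not_exists, not_lt] at hA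
  obtain ⟨Q, hQ, δ, hδ, hQδ⟩ := hA
  refine ⟨(↑) '' Q, hQ.image continuous_subtype_val, δ, hδ, fun ξ => ?_⟩
  obtain ⟨h, hhQ, hle⟩ := hQδ ((π.fixedSubspace H)ᗮ.orthogonalProjectionOnto ξ)
  refine ⟨h, ⟨h, hhQ, rfl⟩, ?_⟩
  calc δ * ‖ξ - (π.fixedSubspace H).starProjection ξ‖
      = δ * ‖(π.fixedSubspace H)ᗮ.orthogonalProjectionOnto ξ‖ := by
        rw [← Submodule.starProjection_orthogonal_val]; rfl
    _ ≤ _ := hle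
    _ ≤ ‖π.op h ξ - ξ‖ := norm_compressOrthogonalFixed_op_sub_le h ξ

theorem propertyT_of_normal_subgroup_and_quotient_general {G : Type u} [Group G] [TopologicalSpace G]
    [IsTopologicalGroup G] [LocallyCompactSpace G] (c : ℝ)
    (H : Subgroup G) [H.Normal]
    (hTH : HasPropertyT.{u, v} ↥H c) (hTQ : HasPropertyT.{u, v} (G ⧸ H) c) :
    HasPropertyT.{u, v} G c := by
  intro π hπ hA
  obtain ⟨Q₀, hQ₀, δ, hδ, hQ₀δ⟩ := hTH.exists_isCompact_norm_sub_starProjection_le hπ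
  have hinv : (π.fixedQuotient H).HasInvariantVector :=
    hTQ _ ((hπ.subrep _ _).factor H _) ((hA.subrep hπ.1 _ _ hQ₀ hδ hQ₀δ).factor H _)
  exact hinv.of_factor.of_subrep

theorem propertyT_of_normal_subgroup_and_quotient {G : Type u} [Group G] [TopologicalSpace G]
    [IsTopologicalGroup G] [LocallyCompactSpace G] (c : ℝ) (hc : 1 ≤ c)
    (H : Subgroup G) [H.Normal] (hH : IsClosed (H : Set G))
    (hTH : HasPropertyT.{u, v} ↥H c) (hTQ : HasPropertyT.{u, v} (G ⧸ H) c) :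
    HasPropertyT.{u, v} G c :=
  propertyT_of_normal_subgroup_and_quotient_general c H hTH hTQ
end

section
/- Let G be a locally compact group which is unitarisable. Then c_ub(G) ∈ {1, ∞}; that is, either G does not have Kazhdan's Property (T) (so c_ub(G) = 1), or G has Property (T)_c for every c ≥ 1 (so c_ub(G) = ∞). -/
open scoped ENNReal
open MeasureTheory

universe u v

open Classical in
/-- The constant `c_ub(G) ∈ [1, ∞]`. -/
noncomputable def cUB (G : Type u) [Group G] [TopologicalSpace G] : ℝ≥0∞ :=
  if HasPropertyT.{u, v} G 1 then
    ⨆ (c : ℝ) (_ : 1 ≤ c ∧ HasPropertyT.{u, v} G c), ENNReal.ofReal c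
  else 1

/-- `G` is unitarisable: every strongly continuous uniformly bounded representation is
conjugate, by a bounded invertible operator, to a unitary representation. -/
def Unitarisable (G : Type u) [Group G] [TopologicalSpace G] : Prop :=
  ∀ π : HilbRep.{u, v} G, π.IsSOTContinuous → (∃ c : ℝ, π.IsUB c) →
    ∃ S : π.space ≃L[ℂ] π.space, ∀ (s : G) (ξ : π.space), ‖S (π.op s (S.symm ξ))‖ = ‖ξ‖


/-!
Conjugating a representation by a bounded invertible operator `S` preserves strong continuity,
almost invariant vectors (at the cost of a factor `‖S‖ ‖S⁻¹‖` in `ε`) and nonzero invariant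
vectors. If `G` is unitarisable, every `π ∈ R_c(G)` is conjugate to a member of `R_1(G)`, so
Property (T)_1 already gives Property (T)_c for every `c`.
-/

namespace HilbRep

variable {G : Type*} [Group G] [TopologicalSpace G]

abbrev conj (π : HilbRep G) (S : π.space ≃L[ℂ] π.space) : HilbRep G where
  space := π.space
  toFun := (MulAut.conj S.toUnit).toMonoidHom.comp π.toFun

section Conj

variable (π : HilbRep G) (S : π.space ≃L[ℂ] π.space)

theorem conj_op_apply (s : G) (ξ : π.space) : (π.conj S).op s ξ = S (π.op s (S.symm ξ)) := rfl

theorem IsSOTContinuous.conj (hπ : π.IsSOTContinuous) : (π.conj S).IsSOTContinuous :=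
  fun ξ => S.continuous.comp (hπ (S.symm ξ))

theorem AlmostInvariantVectors.conj (hπ : π.AlmostInvariantVectors) :
    (π.conj S).AlmostInvariantVectors := by
  intro Q hQ ε hε
  obtain ⟨a, ha, hSa⟩ := (S : π.space →L[ℂ] π.space).bound
  obtain ⟨b, hb, hSb⟩ := (S.symm : π.space →L[ℂ] π.space).bound
  obtain ⟨η, hη⟩ := hπ Q hQ (ε / (a * b)) (by positivity)
  refine ⟨S η, fun s hs => ?_⟩
  have hη_le : ‖η‖ ≤ b * ‖S η‖ := by simpa using hSb (S η)
  calc ‖(π.conj S).op s (S η) - S η‖ = ‖S (π.op s η - η)‖ := by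
        rw [conj_op_apply, S.symm_apply_apply, map_sub]
    _ ≤ a * ‖π.op s η - η‖ := hSa _
    _ < a * (ε / (a * b) * ‖η‖) := by gcongr; exact hη s hs
    _ ≤ a * (ε / (a * b) * (b * ‖S η‖)) := by gcongr
    _ = ε * ‖S η‖ := by field_simp

theorem HasInvariantVector.of_conj (h : (π.conj S).HasInvariantVector) : π.HasInvariantVector := by
  obtain ⟨ζ, hζ, hζ_inv⟩ := h
  refine ⟨S.symm ζ, by simpa using hζ, fun s => S.injective ?_⟩
  rw [S.apply_symm_apply]
  exact hζ_inv s

end Conj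

theorem isUB_one_of_norm_op_apply {π : HilbRep G} (h : ∀ s ξ, ‖π.op s ξ‖ = ‖ξ‖) : π.IsUB 1 :=
  fun s => ContinuousLinearMap.opNorm_le_bound _ zero_le_one fun ξ => by rw [h, one_mul]

end HilbRep

theorem Unitarisable.exists_conj_isRc_one {G : Type u} [Group G] [TopologicalSpace G]
    (hU : Unitarisable.{u, v} G) {π : HilbRep.{u, v} G} {c : ℝ} (hπ : π.IsRc c) :
    ∃ S : π.space ≃L[ℂ] π.space, (π.conj S).IsRc 1 := by
  obtain ⟨S, hS⟩ := hU π hπ.2 ⟨c, hπ.1⟩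
  exact ⟨S, HilbRep.isUB_one_of_norm_op_apply hS, hπ.2.conj π S⟩

theorem Unitarisable.hasPropertyT {G : Type u} [Group G] [TopologicalSpace G]
    (hU : Unitarisable.{u, v} G) (hT : HasPropertyT.{u, v} G 1) (c : ℝ) :
    HasPropertyT.{u, v} G c := by
  intro π hπ hA
  obtain ⟨S, hS⟩ := hU.exists_conj_isRc_one hπ
  exact (hT (π.conj S) hS (hA.conj π S)).of_conj π S

theorem cUB_eq_one_of_not_hasPropertyT_one {G : Type u} [Group G] [TopologicalSpace G]
    (h : ¬ HasPropertyT.{u, v} G 1) : cUB.{u, v} G = 1 := by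
  rw [cUB, if_neg h]

theorem cUB_eq_top_of_forall_hasPropertyT {G : Type u} [Group G] [TopologicalSpace G]
    (h : ∀ c : ℝ, 1 ≤ c → HasPropertyT.{u, v} G c) : cUB.{u, v} G = ⊤ := by
  rw [cUB, if_pos (h 1 le_rfl)]
  refine ENNReal.eq_top_of_forall_nnreal_le fun r => ?_
  have hc : 1 ≤ max (r : ℝ) 1 := le_max_right _ _
  refine le_iSup₂_of_le (max (r : ℝ) 1) ⟨hc, h _ hc⟩ ?_
  rw [← ENNReal.ofReal_coe_nnreal]
  exact ENNReal.ofReal_le_ofReal (le_max_left _ _)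

theorem cUB_eq_one_or_top_of_unitarisable_general {G : Type u} [Group G] [TopologicalSpace G]
    (hU : Unitarisable.{u, v} G) :
    (¬ HasPropertyT.{u, v} G 1 ∧ cUB.{u, v} G = 1) ∨
      ((∀ c : ℝ, 1 ≤ c → HasPropertyT.{u, v} G c) ∧ cUB.{u, v} G = ⊤) := by
  by_cases hT : HasPropertyT.{u, v} G 1
  · have hTc : ∀ c : ℝ, 1 ≤ c → HasPropertyT.{u, v} G c := fun c _ => hU.hasPropertyT hT c
    exact Or.inr ⟨hTc, cUB_eq_top_of_forall_hasPropertyT hTc⟩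
  · exact Or.inl ⟨hT, cUB_eq_one_of_not_hasPropertyT_one hT⟩

theorem cUB_eq_one_or_top_of_unitarisable {G : Type u} [Group G] [TopologicalSpace G]
    [IsTopologicalGroup G] [LocallyCompactSpace G] (hU : Unitarisable.{u, v} G) :
    (¬ HasPropertyT.{u, v} G 1 ∧ cUB.{u, v} G = 1) ∨
      ((∀ c : ℝ, 1 ≤ c → HasPropertyT.{u, v} G c) ∧ cUB.{u, v} G = ⊤) :=
  cUB_eq_one_or_top_of_unitarisable_general hU
end
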